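/- Let n ≥ 2 and let G be a group that is not mixed identity-free (not MIF). Then the action of Aut_G(G ∗ F_n) on Hom_G(G ∗ F_n, G) by precomposition is not faithful: there exists a non-identity G-automorphism α of G ∗ F_n with φ ∘ α = φ for every G-homomorphism φ : G ∗ F_n → G. -/

import Mathlib

/-!
It suffices to find `c ≠ 1` in `G ∗ F_n` that is killed by every `G`-homomorphism and does not
involve `x₀`: the transvection `x₀ ↦ x₀ c`, fixing `G` and the other generators, is then a
nontrivial `G`-automorphism fixing every `G`-homomorphism. For trivial `G` take `c = x₁`.

Otherwise non-MIF provides `w ≠ 1` in some `G ∗ F_m` killed by every `G`-homomorphism, and we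
push it into `G ∗ ⟨y⟩`, `y = x₁`, by the `G`-homomorphism `x_j ↦ y^a g y g y^(-a-1)`,
`a = 2j + 1`, for a fixed `g ≠ 1`. This map is injective by ping-pong on reduced words of
`G ∗ ℤ`: nonzero powers of the image of `x_j` send every word whose leading `ℤ`-syllable is not
`y^a` or `y^(a+1)` to one whose leading syllable is, and these pairs of exponents are disjoint
for distinct `j` and avoid `0`, the leading `ℤ`-syllable of a word that starts with a letter of
`G`.
-/

/-- `G` is mixed identity-free (MIF) if for every `m ≥ 1` and every `w ≠ 1` in
`G ∗ F_m` there is a `G`-homomorphism `φ : G ∗ F_m → G` with `φ w ≠ 1`. -/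
def IsMIF (G : Type*) [Group G] : Prop :=
  ∀ m : ℕ, 1 ≤ m → ∀ w : Monoid.Coprod G (FreeGroup (Fin m)), w ≠ 1 →
    ∃ φ : Monoid.Coprod G (FreeGroup (Fin m)) →* G,
      (∀ g : G, φ (Monoid.Coprod.inl g) = g) ∧ φ w ≠ 1

/-- The subgroup `Aut_G(G ∗ F_n)` of `G`-automorphisms of `G ∗ F_n`, i.e.
automorphisms restricting to the identity on (the canonical copy of) `G`. -/
def gAut (G : Type*) [Group G] (n : ℕ) :
    Subgroup (MulAut (Monoid.Coprod G (FreeGroup (Fin n)))) where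
  carrier := {α | ∀ g : G, α (Monoid.Coprod.inl g) = Monoid.Coprod.inl g}
  one_mem' := fun _ => rfl
  mul_mem' := fun {a b} ha hb g => by
    simp only [Set.mem_setOf_eq] at ha hb
    show a (b _) = _
    rw [hb g, ha g]
  inv_mem' := fun {a} ha g => by
    simp only [Set.mem_setOf_eq] at ha
    show a⁻¹ _ = _
    conv_lhs => rw [← ha g]
    exact a.symm_apply_apply _

/-- The set `Hom_G(G ∗ F_n, G)` of `G`-homomorphisms `G ∗ F_n → G`, i.e.
homomorphisms restricting to the identity on `G`. -/
def GHom (G : Type*) [Group G] (n : ℕ) :=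
  {φ : Monoid.Coprod G (FreeGroup (Fin n)) →* G // ∀ g : G, φ (Monoid.Coprod.inl g) = g}

open Monoid
open scoped Monoid.Coprod

namespace Monoid.CoprodI.Word

variable {ι : Type*} [DecidableEq ι] {M : ι → Type*} [∀ i, Monoid (M i)]
  [∀ i, DecidableEq (M i)]

theorem equivPair_head_of_smul {i : ι} (m : M i) (w : Word M) :
    (equivPair i (of m • w)).head = m * (equivPair i w).head := by
  rw [equivPair_smul_same]

theorem equivPair_head_eq_one_of_ne {i j : ι} (hij : i ≠ j) {w : Word M}
    (h : (equivPair i w).head ≠ 1) : (equivPair j w).head = 1 := by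
  rw [equivPair_head] at h ⊢
  obtain ⟨_, hi⟩ : ∃ hne : w.toList ≠ [], (w.toList.head hne).1 = i := by
    by_contra hc
    exact h (dif_neg hc)
  exact dif_neg fun ⟨_, hj⟩ => hij (hi.symm.trans hj)

theorem equivPair_head_empty (i : ι) : (equivPair i (empty : Word M)).head = 1 := by
  rw [equivPair_eq_of_fstIdx_ne (by simp [fstIdx])]

theorem equivPair_head_of_smul_of_ne {i j : ι} (hij : i ≠ j) (m : M i) {w : Word M}
    (hw : (equivPair j w).head ≠ 1) : (equivPair i (of m • w)).head = m := by
  rw [equivPair_head_of_smul, equivPair_head_eq_one_of_ne hij.symm hw, mul_one]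

theorem equivPair_head_alternating_smul {i j : ι} (hij : i ≠ j) {g g' : M i} (hg : g ≠ 1)
    (hg' : g' ≠ 1) {z : M j} (hz : z ≠ 1) (x x' : M j) {w : Word M}
    (hw : x' * (equivPair j w).head ≠ 1) :
    (equivPair j ((of x * of g * of z * of g' * of x') • w)).head = x := by
  have h₁ : (equivPair j (of x' • w)).head ≠ 1 := by rwa [equivPair_head_of_smul]
  have h₂ := equivPair_head_of_smul_of_ne hij g' h₁
  have h₃ := equivPair_head_of_smul_of_ne hij.symm z (by rw [h₂]; exact hg')
  have h₄ := equivPair_head_of_smul_of_ne hij g (by rw [h₃]; exact hz)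
  simp only [mul_smul]
  rw [equivPair_head_of_smul, equivPair_head_eq_one_of_ne hij (by rw [h₄]; exact hg), mul_one]

end Monoid.CoprodI.Word

theorem Set.MapsTo.pow_succ_smul {M α : Type*} [Monoid M] [MulAction M α] {p : M}
    {A B : Set α} (hAB : A ⊆ B) (hp : Set.MapsTo (p • ·) B A) (n : ℕ) :
    Set.MapsTo (p ^ (n + 1) • ·) B A := by
  induction n with
  | zero => simpa using hp
  | succ n ih =>
    intro v hv
    show p ^ (n + 1 + 1) • v ∈ A
    rw [pow_succ', mul_smul]
    exact hp (hAB (ih hv))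

def pingPongElement {T : Type*} [Group T] (g y : T) (a : ℤ) : T :=
  y ^ a * g * y * g * y ^ (-a - 1)

theorem pingPongElement_inv {T : Type*} [Group T] (g y : T) (a : ℤ) :
    (pingPongElement g y a)⁻¹ = y ^ (a + 1) * g⁻¹ * y⁻¹ * g⁻¹ * y ^ (-a) := by
  simp only [pingPongElement, mul_inv_rev, ← zpow_neg]
  group

theorem map_pingPongElement {T T' : Type*} [Group T] [Group T'] (f : T →* T') (g y : T)
    (a : ℤ) :
    f (pingPongElement g y a) = pingPongElement (f g) (f y) a := by
  simp [pingPongElement]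

universe u

def upOfAdd (k : ℤ) : ULift.{u} (Multiplicative ℤ) := .up (.ofAdd k)

@[simp]
theorem upOfAdd_inv (a : ℤ) : (upOfAdd.{u} a)⁻¹ = upOfAdd (-a) := rfl

theorem upOfAdd_zero : upOfAdd.{u} 0 = 1 := rfl

theorem upOfAdd_injective : Function.Injective upOfAdd.{u} := fun _ _ h =>
  Multiplicative.ofAdd.injective (congrArg ULift.down h)

@[simp]
theorem upOfAdd_inj {a b : ℤ} : upOfAdd.{u} a = upOfAdd b ↔ a = b :=
  upOfAdd_injective.eq_iff

@[simp]
theorem upOfAdd_eq_one {a : ℤ} : upOfAdd.{u} a = 1 ↔ a = 0 := by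
  rw [← upOfAdd_zero, upOfAdd_inj]

theorem upOfAdd_one_zpow (k : ℤ) : upOfAdd.{u} 1 ^ k = upOfAdd k := by
  ext
  simp [upOfAdd, ULift.pow_down, ← ofAdd_zsmul]

@[simp]
theorem ulift_upOfAdd (k : ℤ) : MulEquiv.ulift (upOfAdd.{u} k) = Multiplicative.ofAdd k := rfl

-- `ℤ` is lifted to `Type u` so that it can sit in one family of groups with `G`.
abbrev GIntFactors (G : Type u) : Bool → Type u
  | false => G
  | true => ULift.{u} (Multiplicative ℤ)

instance (G : Type u) [Group G] : ∀ b, Group (GIntFactors G b)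
  | false => inferInstanceAs (Group G)
  | true => inferInstanceAs (Group (ULift (Multiplicative ℤ)))

abbrev GFreeFactors (G : Type u) (m : ℕ) : Option (Fin m) → Type u
  | none => G
  | some _ => ULift.{u} (Multiplicative ℤ)

instance (G : Type u) [Group G] (m : ℕ) : ∀ o, Group (GFreeFactors G m o)
  | none => inferInstanceAs (Group G)
  | some _ => inferInstanceAs (Group (ULift (Multiplicative ℤ)))

section PingPong

open CoprodI Word
open scoped Classical Function

variable (G : Type u) [Group G]

def intGen : CoprodI (GIntFactors G) := of (i := true) (upOfAdd 1)

theorem intGen_zpow (k : ℤ) : intGen G ^ k = of (i := true) (upOfAdd k) := by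
  rw [intGen, ← map_zpow, upOfAdd_one_zpow]

variable {G}

theorem head_pingPongElement_smul {g : G} (hg : g ≠ 1) (a : ℤ) {v : Word (GIntFactors G)}
    (hv : (equivPair true v).head ≠ upOfAdd (a + 1)) :
    (equivPair true (pingPongElement (of (i := false) g) (intGen G) a • v)).head =
      upOfAdd a := by
  rw [pingPongElement, intGen_zpow, intGen_zpow]
  refine equivPair_head_alternating_smul Bool.false_ne_true hg hg
    (upOfAdd_eq_one.not.mpr one_ne_zero) _ _ fun h => hv ?_
  rw [← inv_eq_of_mul_eq_one_right h, upOfAdd_inv]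
  congr 1
  ring

theorem head_pingPongElement_inv_smul {g : G} (hg : g ≠ 1) (a : ℤ) {v : Word (GIntFactors G)}
    (hv : (equivPair true v).head ≠ upOfAdd a) :
    (equivPair true ((pingPongElement (of (i := false) g) (intGen G) a)⁻¹ • v)).head =
      upOfAdd (a + 1) := by
  rw [pingPongElement_inv, intGen_zpow, intGen_zpow, ← map_inv, intGen, ← map_inv]
  refine equivPair_head_alternating_smul Bool.false_ne_true (inv_ne_one.mpr hg)
    (inv_ne_one.mpr hg) (inv_ne_one.mpr (upOfAdd_eq_one.not.mpr one_ne_zero)) _ _ fun h => hv ?_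
  rw [← inv_eq_of_mul_eq_one_right h, upOfAdd_inv, neg_neg]

theorem head_pingPongElement_zpow_smul {g : G} (hg : g ≠ 1) (a : ℤ) {k : ℤ} (hk : k ≠ 0)
    {v : Word (GIntFactors G)}
    (hv : (equivPair true v).head ∉ ({upOfAdd a, upOfAdd (a + 1)} : Set _)) :
    (equivPair true (pingPongElement (of (i := false) g) (intGen G) a ^ k • v)).head ∈
      ({upOfAdd a, upOfAdd (a + 1)} : Set _) := by
  simp only [Set.mem_insert_iff, Set.mem_singleton_iff, not_or] at hv ⊢
  obtain ⟨n, rfl | rfl⟩ := Int.eq_nat_or_neg k <;>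
    obtain ⟨n, rfl⟩ := Nat.exists_eq_add_one_of_ne_zero (by omega : n ≠ 0)
  · left
    rw [zpow_natCast]
    exact Set.MapsTo.pow_succ_smul
      (A := {v : Word (GIntFactors G) | (equivPair true v).head = upOfAdd a})
      (B := {v : Word (GIntFactors G) | (equivPair true v).head ≠ upOfAdd (a + 1)})
      (fun v (hv : _ = _) => by simp [hv]) (fun v hv => head_pingPongElement_smul hg a hv)
      n hv.2
  · right
    rw [zpow_neg, zpow_natCast, ← inv_pow]
    exact Set.MapsTo.pow_succ_smul
      (A := {v : Word (GIntFactors G) | (equivPair true v).head = upOfAdd (a + 1)})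
      (B := {v : Word (GIntFactors G) | (equivPair true v).head ≠ upOfAdd a})
      (fun v (hv : _ = _) => by simp [hv]) (fun v hv => head_pingPongElement_inv_smul hg a hv)
      n hv.1

def pingPongHom (g : G) (m : ℕ) : ∀ o, GFreeFactors G m o →* CoprodI (GIntFactors G)
  | none => of (M := GIntFactors G) (i := false)
  | some j => uliftZPowersHom _ (pingPongElement (of (i := false) g) (intGen G) (2 * j + 1))

variable (G) in
def pingPongSet (m : ℕ) : Option (Fin m) → Set (Word (GIntFactors G))
  | none => {v | (equivPair false v).head ≠ 1}
  | some j => {v | (equivPair true v).head ∈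
      ({upOfAdd (2 * j + 1), upOfAdd (2 * j + 1 + 1)} : Set _)}

theorem head_ne_one_of_mem_pingPongSet {m : ℕ} {j : Fin m} {v : Word (GIntFactors G)}
    (hv : v ∈ pingPongSet G m (some j)) : (equivPair true v).head ≠ 1 := by
  simp only [pingPongSet, Set.mem_ofPred_eq, Set.mem_insert_iff, Set.mem_singleton_iff] at hv
  rcases hv with hv | hv <;> rw [hv] <;> exact upOfAdd_eq_one.not.mpr (by omega)

theorem pingPongSet_pairwise_disjoint (m : ℕ) : Pairwise (Disjoint on pingPongSet G m) := by
  have not_mem_some_of_mem_none {v : Word (GIntFactors G)} (j : Fin m)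
      (hv : v ∈ pingPongSet G m none) : v ∉ pingPongSet G m (some j) := fun hv' =>
    head_ne_one_of_mem_pingPongSet hv' (equivPair_head_eq_one_of_ne Bool.false_ne_true hv)
  rintro (_ | j) (_ | j') hne <;> rw [Function.onFun, Set.disjoint_left]
  · exact absurd rfl hne
  · exact fun v hv => not_mem_some_of_mem_none j' hv
  · exact fun v hv hv' => not_mem_some_of_mem_none j hv' hv
  · have : (j : ℤ) ≠ j' := by simpa [Fin.val_inj] using hne
    intro v hv hv'
    simp only [pingPongSet, Set.mem_ofPred_eq, Set.mem_insert_iff, Set.mem_singleton_iff] at hv hv'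
    rcases hv with hv | hv <;> rcases hv' with hv' | hv' <;> rw [hv, upOfAdd_inj] at hv' <;> omega

theorem lift_pingPongHom_injective {g : G} (hg : g ≠ 1) {m : ℕ} (hm : 0 < m) :
    Function.Injective (CoprodI.lift (pingPongHom g m)) := by
  have : Nontrivial (Option (Fin m)) := ⟨none, some ⟨0, hm⟩, nofun⟩
  refine lift_injective_of_ping_pong _ (Or.inr ⟨some ⟨0, hm⟩, ?_⟩) (pingPongSet G m) ?_
    (pingPongSet_pairwise_disjoint m) ?_
  · exact Cardinal.natCast_lt_aleph0.le.trans (Cardinal.aleph0_le_mk _)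
  · rintro (_ | j)
    · exact ⟨of (M := GIntFactors G) (i := false) g • empty, by
        simp [pingPongSet, equivPair_head_of_smul, equivPair_head_empty, hg]⟩
    · exact ⟨of (M := GIntFactors G) (i := true) (upOfAdd (2 * j + 1)) • empty, by
        simp [pingPongSet, equivPair_head_of_smul, equivPair_head_empty]⟩
  rintro (_ | j) o hne h hh _ ⟨v, hv, rfl⟩
  · obtain _ | j' := o
    · exact absurd rfl hne
    show (equivPair false (of (M := GIntFactors G) (i := false) h • v)).head ≠ 1
    rwa [equivPair_head_of_smul_of_ne Bool.false_ne_true h (head_ne_one_of_mem_pingPongSet hv)]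
  · obtain ⟨k⟩ := h
    have hk : Multiplicative.toAdd k ≠ 0 := fun hk => hh (congrArg ULift.up hk)
    exact head_pingPongElement_zpow_smul hg _ hk
      (Set.disjoint_right.1 (pingPongSet_pairwise_disjoint m hne) hv)

end PingPong

section FreeProduct

open Coprod

variable {G : Type u} [Group G] {m n : ℕ}

variable (G m) in
def toCoprodI : G ∗ FreeGroup (Fin m) →* CoprodI (GFreeFactors G m) :=
  Coprod.lift (CoprodI.of (M := GFreeFactors G m) (i := none))
    (FreeGroup.lift fun j => CoprodI.of (M := GFreeFactors G m) (i := some j) (upOfAdd 1))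

def ofCoprodI : CoprodI (GFreeFactors G m) →* G ∗ FreeGroup (Fin m) :=
  CoprodI.lift fun
    | none => inl
    | some j => uliftZPowersHom _ (inr (FreeGroup.of j))

theorem ofCoprodI_comp_toCoprodI : ofCoprodI.comp (toCoprodI G m) = MonoidHom.id _ := by
  ext <;> simp [toCoprodI, ofCoprodI]

theorem toCoprodI_injective : Function.Injective (toCoprodI G m) :=
  Function.LeftInverse.injective (DFunLike.congr_fun ofCoprodI_comp_toCoprodI)

def pingPongEmbedding (g : G) (i : Fin n) : G ∗ FreeGroup (Fin m) →* G ∗ FreeGroup (Fin n) :=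
  Coprod.lift inl
    (FreeGroup.lift fun j => pingPongElement (inl g) (inr (FreeGroup.of i)) (2 * j + 1))

@[simp]
theorem pingPongEmbedding_inl (g : G) (i : Fin n) (g' : G) :
    pingPongEmbedding (m := m) g i (inl g') = inl g' :=
  lift_apply_inl _ _ _

variable (G n) in
def toGIntFactors : G ∗ FreeGroup (Fin n) →* CoprodI (GIntFactors G) :=
  Coprod.lift (CoprodI.of (M := GIntFactors G) (i := false)) (FreeGroup.lift fun _ => intGen G)

theorem toGIntFactors_comp_pingPongEmbedding (g : G) (i : Fin n) :
    (toGIntFactors G n).comp (pingPongEmbedding (m := m) g i) =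
      (CoprodI.lift (pingPongHom g m)).comp (toCoprodI G m) := by
  ext <;> simp [toGIntFactors, pingPongEmbedding, toCoprodI, pingPongHom, map_pingPongElement]

theorem pingPongEmbedding_injective {g : G} (hg : g ≠ 1) (hm : 0 < m) (i : Fin n) :
    Function.Injective (pingPongEmbedding (m := m) g i) := by
  refine Function.Injective.of_comp (f := toGIntFactors G n) ?_
  rw [← MonoidHom.coe_comp, toGIntFactors_comp_pingPongEmbedding, MonoidHom.coe_comp]
  exact (lift_pingPongHom_injective hg hm).comp toCoprodI_injective

end FreeProduct

section Transvection

open Coprod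

variable {G : Type u} [Group G] {n : ℕ}

def transvection (i : Fin n) (c : G ∗ FreeGroup (Fin n)) :
    G ∗ FreeGroup (Fin n) →* G ∗ FreeGroup (Fin n) :=
  Coprod.lift inl
    (FreeGroup.lift fun j => inr (FreeGroup.of j) * (Pi.mulSingle i c : Fin n → _) j)

@[simp]
theorem transvection_inl (i : Fin n) (c : G ∗ FreeGroup (Fin n)) (g : G) :
    transvection i c (inl g) = inl g := by
  simp [transvection]

@[simp]
theorem transvection_inr_of (i : Fin n) (c : G ∗ FreeGroup (Fin n)) (j : Fin n) :
    transvection i c (inr (FreeGroup.of j)) =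
      inr (FreeGroup.of j) * (Pi.mulSingle i c : Fin n → _) j := by
  simp [transvection]

theorem transvection_one (i : Fin n) : transvection i (1 : G ∗ FreeGroup (Fin n)) = .id _ := by
  ext <;> simp

theorem transvection_comp_transvection {i : Fin n} {c d : G ∗ FreeGroup (Fin n)}
    (hd : transvection i c d = d) :
    (transvection i c).comp (transvection i d) = transvection i (c * d) := by
  apply Coprod.hom_ext
  · ext g
    simp
  · ext j
    rcases eq_or_ne j i with rfl | hj
    · simp [hd, mul_assoc]
    · simp [hj]

theorem transvection_comp_pingPongEmbedding {m : ℕ} {i i' : Fin n} (hi : i' ≠ i)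
    (c : G ∗ FreeGroup (Fin n)) (g : G) :
    (transvection i c).comp (pingPongEmbedding (m := m) g i') = pingPongEmbedding g i' := by
  ext <;> simp [pingPongEmbedding, map_pingPongElement, hi]

def transvectionEquiv (i : Fin n) (c : G ∗ FreeGroup (Fin n))
    (hc : ∀ d, transvection i d c = c) : MulAut (G ∗ FreeGroup (Fin n)) :=
  MonoidHom.toMulEquiv (transvection i c) (transvection i c⁻¹)
    (by rw [transvection_comp_transvection (hc _), inv_mul_cancel, transvection_one])
    (by rw [transvection_comp_transvection (by rw [map_inv, hc]), mul_inv_cancel,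
      transvection_one])

theorem GHom.comp_transvection (φ : GHom G n) {i : Fin n} {c : G ∗ FreeGroup (Fin n)}
    (hc : φ.1 c = 1) : φ.1.comp (transvection i c) = φ.1 := by
  apply Coprod.hom_ext
  · ext g
    simp
  · ext j
    rcases eq_or_ne j i with rfl | hj
    · simp [hc]
    · simp [hj]

theorem exists_gAut_ne_one_forall_GHom_comp {i : Fin n} {c : G ∗ FreeGroup (Fin n)}
    (hc : ∀ d, transvection i d c = c) (hc₁ : c ≠ 1) (hker : ∀ φ : GHom G n, φ.1 c = 1) :
    ∃ α ∈ gAut G n, α ≠ 1 ∧ ∀ φ : GHom G n, φ.1.comp α.toMonoidHom = φ.1 := by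
  refine ⟨transvectionEquiv i c hc, transvection_inl i c, fun h => hc₁ ?_,
    fun φ => φ.comp_transvection (hker φ)⟩
  have := DFunLike.congr_fun h (inr (FreeGroup.of i))
  simpa [transvectionEquiv] using this

end Transvection

theorem exists_transvection_invariant_mixedIdentity {G : Type u} [Group G] [Nontrivial G]
    (hG : ¬ IsMIF G) {n : ℕ} {i i' : Fin n} (hi : i' ≠ i) :
    ∃ c : G ∗ FreeGroup (Fin n), c ≠ 1 ∧ (∀ d, transvection i d c = c) ∧
      ∀ φ : GHom G n, φ.1 c = 1 := by
  obtain ⟨m, hm, w, hw, hker⟩ : ∃ m, 1 ≤ m ∧ ∃ w : G ∗ FreeGroup (Fin m), w ≠ 1 ∧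
      ∀ φ : G ∗ FreeGroup (Fin m) →* G, (∀ g, φ (Coprod.inl g) = g) → φ w = 1 := by
    simpa [IsMIF] using hG
  obtain ⟨g, hg⟩ := exists_ne (1 : G)
  refine ⟨pingPongEmbedding g i' w, ?_, fun d => ?_, fun φ => ?_⟩
  · exact (map_ne_one_iff _ (pingPongEmbedding_injective hg hm i')).mpr hw
  · exact DFunLike.congr_fun (transvection_comp_pingPongEmbedding hi d g) w
  · exact hker (φ.1.comp _) fun g => by simp [φ.2]

/-- If `n ≥ 2` and `G` is not MIF, then the action of `Aut_G(G ∗ F_n)` on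
`Hom_G(G ∗ F_n, G)` by precomposition is not faithful: there is a non-identity
`G`-automorphism `α` with `φ ∘ α = φ` for every `G`-homomorphism `φ`. -/
theorem gAut_action_not_faithful_of_not_MIF (G : Type*) [Group G]
    (hmif : ¬ IsMIF G) (n : ℕ) (hn : 2 ≤ n) :
    ∃ α ∈ gAut G n, α ≠ 1 ∧
      ∀ φ : GHom G n, φ.1.comp α.toMonoidHom = φ.1 := by
  have h₁₀ : (⟨1, hn⟩ : Fin n) ≠ ⟨0, by omega⟩ := by simp
  obtain ⟨c, hc₁, hc, hker⟩ : ∃ c : G ∗ FreeGroup (Fin n), c ≠ 1 ∧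
      (∀ d, transvection ⟨0, by omega⟩ d c = c) ∧ ∀ φ : GHom G n, φ.1 c = 1 := by
    rcases subsingleton_or_nontrivial G with hG | hG
    · exact ⟨Coprod.inr (FreeGroup.of ⟨1, hn⟩),
        (map_ne_one_iff _ Coprod.inr_injective).mpr (FreeGroup.of_ne_one _),
        fun d => by simp [h₁₀], fun φ => Subsingleton.elim _ _⟩
    · exact exists_transvection_invariant_mixedIdentity hmif h₁₀
  exact exists_gAut_ne_one_forall_GHom_comp hc hc₁ hker
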